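/- For every nonzero real number a, the map L̃ of Theorem 6.1 satisfies the PDE system ∂²L̃/∂x² = (i/a³)·∂L̃/∂y, ∂²L̃/∂x∂y = L̃, and ∂²L̃/∂y² = −i·a³·∂L̃/∂x at every point of ℝ². (The middle equation says that the mixed second derivative is purely in the position direction, which expresses minimality of the projected surface π∘L̃ in CP²₁(4).) -/

import Mathlib

/-!
`L̃` is a combination of three exponential modes `e^{p x + y / p} w`, where `p` runs through
the three cube roots of `c = i / a³` (note `-i a³ = c⁻¹`). For such a mode `p² = c / p`,
`p · p⁻¹ = 1` and `p⁻² = c⁻¹ p`, which are exactly the three equations of the system on a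
single mode; the system is linear, so it holds for the sum.
-/

open Complex

/-- The index-one Hermitian form `b(z,w) = −conj z₁ · w₁ + conj z₂ · w₂ + conj z₃ · w₃`
on `ℂ³`, over which the pseudo-sphere `S⁵₂(1) = {z : b(z,z) = 1}` and the Hopf
fibration `π : S⁵₂(1) → CP²₁(4)` are defined. -/
noncomputable def bSph (z w : ℂ × ℂ × ℂ) : ℂ :=
  -(starRingEnd ℂ z.1) * w.1 + (starRingEnd ℂ z.2.1) * w.2.1
    + (starRingEnd ℂ z.2.2) * w.2.2

/-- The horizontal lift `L̃ : ℝ² → ℂ³` of Theorem 6.1 (the timelike first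
coordinate carries the `sinh` factor). -/
noncomputable def Lcp (a x y : ℝ) : ℂ × ℂ × ℂ :=
  ((1 / Real.sqrt 3 : ℝ) : ℂ) •
    (((Real.sqrt 2 : ℝ) : ℂ) * Complex.exp (Complex.I * ((x - a ^ 2 * y : ℝ) : ℂ) / (2 * (a : ℂ)))
        * ((Real.sinh (Real.sqrt 3 * (x + a ^ 2 * y) / (2 * a)) : ℝ) : ℂ),
     Complex.exp (Complex.I * ((a ^ 2 * y - x : ℝ) : ℂ) / (a : ℂ)),
     ((Real.sqrt 2 : ℝ) : ℂ) * Complex.exp (Complex.I * ((x - a ^ 2 * y : ℝ) : ℂ) / (2 * (a : ℂ)))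
        * ((Real.cosh (Real.sqrt 3 * (x + a ^ 2 * y) / (2 * a)) : ℝ) : ℂ))

section ExpSum

variable {ι E : Type*} [NormedAddCommGroup E] [NormedSpace ℂ E]

noncomputable def expSum (s : Finset ι) (p q : ι → ℂ) (w : ι → E) (x y : ℝ) : E :=
  ∑ i ∈ s, cexp (p i * x + q i * y) • w i

variable (s : Finset ι) (p q : ι → ℂ) (w : ι → E)

lemma expSum_swap (x y : ℝ) : expSum s q p w y x = expSum s p q w x y := by
  simp only [expSum, add_comm]

lemma hasDerivAt_expSum_fst (x y : ℝ) :
    HasDerivAt (fun t => expSum s p q w t y) (expSum s p q (p • w) x y) x := by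
  refine HasDerivAt.fun_sum fun i _ => ?_
  have h : HasDerivAt (fun t : ℝ => p i * t + q i * y) (p i) x := by
    simpa using ((hasDerivAt_id x).ofReal_comp.const_mul (p i)).add_const (q i * y)
  simpa [smul_smul, mul_comm] using h.cexp.smul_const (w i)

lemma deriv_expSum_fst (x y : ℝ) :
    deriv (fun t => expSum s p q w t y) x = expSum s p q (p • w) x y :=
  (hasDerivAt_expSum_fst s p q w x y).deriv

lemma deriv_expSum_snd (x y : ℝ) :
    deriv (fun t => expSum s p q w x t) y = expSum s p q (q • w) x y := by
  simp only [← expSum_swap s p q]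
  exact deriv_expSum_fst s q p w y x

lemma smul_expSum (c : ℂ) (x y : ℝ) : c • expSum s p q w x y = expSum s p q (c • w) x y := by
  simp only [expSum, Finset.smul_sum, Pi.smul_apply, smul_comm c]

lemma expSum_smul_congr {u v : ι → ℂ} (h : ∀ i ∈ s, u i = v i) (x y : ℝ) :
    expSum s p q (u • w) x y = expSum s p q (v • w) x y :=
  Finset.sum_congr rfl fun i hi => by simp only [Pi.smul_apply', h i hi]

variable {s p q}

lemma expSum_deriv_xx {c : ℂ} (hp : ∀ i ∈ s, p i ^ 3 = c) (hpq : ∀ i ∈ s, p i * q i = 1)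
    (x y : ℝ) :
    deriv (fun x' => deriv (fun t => expSum s p q w t y) x') x
      = c • deriv (fun t => expSum s p q w x t) y := by
  simp only [deriv_expSum_fst, deriv_expSum_snd, smul_expSum, smul_smul]
  rw [← smul_assoc]
  refine expSum_smul_congr s p q w (fun i hi => ?_) x y
  simp only [Pi.mul_apply, Pi.smul_apply, smul_eq_mul]
  linear_combination (-(p i) ^ 2) * hpq i hi + q i * hp i hi

lemma expSum_deriv_xy (hpq : ∀ i ∈ s, p i * q i = 1) (x y : ℝ) :
    deriv (fun x' => deriv (fun t => expSum s p q w x' t) y) x = expSum s p q w x y := by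
  simp only [deriv_expSum_fst, deriv_expSum_snd, smul_smul]
  calc expSum s p q ((p * q) • w) x y = expSum s p q ((1 : ι → ℂ) • w) x y :=
        expSum_smul_congr s p q w hpq x y
    _ = expSum s p q w x y := by rw [one_smul]

lemma expSum_deriv_yy {c : ℂ} (hp : ∀ i ∈ s, p i ^ 3 = c) (hpq : ∀ i ∈ s, p i * q i = 1)
    (x y : ℝ) :
    deriv (fun y' => deriv (fun t => expSum s p q w x t) y') y
      = c⁻¹ • deriv (fun t => expSum s p q w t y) x := by
  simp only [deriv_expSum_fst, deriv_expSum_snd, smul_expSum, smul_smul]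
  rw [← smul_assoc]
  refine expSum_smul_congr s p q w (fun i hi => ?_) x y
  have hp0 : p i ≠ 0 := left_ne_zero_of_mul_eq_one (hpq i hi)
  simp only [Pi.mul_apply, Pi.smul_apply, smul_eq_mul, ← hp i hi,
    eq_inv_of_mul_eq_one_right (hpq i hi)]
  field_simp

end ExpSum

section Lcp

noncomputable def lcpFreqX (a : ℝ) : Fin 3 → ℂ :=
  ![(I + √3) / (2 * a), (I - √3) / (2 * a), -I / a]

noncomputable def lcpFreqY (a : ℝ) : Fin 3 → ℂ :=
  ![a * (√3 - I) / 2, -a * (I + √3) / 2, I * a]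

noncomputable def lcpWeight : Fin 3 → ℂ × ℂ × ℂ :=
  ![(√2 / (2 * √3), 0, √2 / (2 * √3)), (-(√2 / (2 * √3)), 0, √2 / (2 * √3)), (0, 1 / √3, 0)]

lemma sq_ofReal_sqrt_three : ((√3 : ℝ) : ℂ) ^ 2 = 3 := by
  rw [← Complex.ofReal_pow, Real.sq_sqrt (by norm_num)]; norm_num

variable {a : ℝ}

lemma lcpFreqX_pow_three (ha : a ≠ 0) (i : Fin 3) : lcpFreqX a i ^ 3 = I / a ^ 3 := by
  have haC : (a : ℂ) ≠ 0 := Complex.ofReal_ne_zero.mpr ha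
  fin_cases i <;> simp [lcpFreqX] <;> field_simp
  · linear_combination (I + 3 * (√3 : ℂ)) * I_sq + (3 * I + (√3 : ℂ)) * sq_ofReal_sqrt_three
  · linear_combination (I - 3 * (√3 : ℂ)) * I_sq + (3 * I - (√3 : ℂ)) * sq_ofReal_sqrt_three
  · linear_combination -I_sq

lemma lcpFreqX_mul_lcpFreqY (ha : a ≠ 0) (i : Fin 3) : lcpFreqX a i * lcpFreqY a i = 1 := by
  have haC : (a : ℂ) ≠ 0 := Complex.ofReal_ne_zero.mpr ha
  fin_cases i <;> simp [lcpFreqX, lcpFreqY] <;> field_simp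
  · linear_combination sq_ofReal_sqrt_three - I_sq
  · linear_combination sq_ofReal_sqrt_three - I_sq
  · linear_combination -I_sq

lemma Lcp_eq_expSum (ha : a ≠ 0) (x y : ℝ) :
    Lcp a x y = expSum Finset.univ (lcpFreqX a) (lcpFreqY a) lcpWeight x y := by
  have haC : (a : ℂ) ≠ 0 := Complex.ofReal_ne_zero.mpr ha
  simp only [Lcp, expSum, Fin.sum_univ_three, Complex.ofReal_sinh, Complex.ofReal_cosh]
  set u : ℂ := ((√3 * (x + a ^ 2 * y) / (2 * a) : ℝ) : ℂ)
  set θ : ℂ := I * ((x - a ^ 2 * y : ℝ) : ℂ) / (2 * a)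
  have h₀ : cexp (lcpFreqX a 0 * x + lcpFreqY a 0 * y) = cexp θ * cexp u := by
    rw [← Complex.exp_add]; congr 1; simp [lcpFreqX, lcpFreqY, u, θ]; field_simp; ring
  have h₁ : cexp (lcpFreqX a 1 * x + lcpFreqY a 1 * y) = cexp θ * cexp (-u) := by
    rw [← Complex.exp_add]; congr 1; simp [lcpFreqX, lcpFreqY, u, θ]; field_simp; ring
  have h₂ : cexp (lcpFreqX a 2 * x + lcpFreqY a 2 * y)
      = cexp (I * ((a ^ 2 * y - x : ℝ) : ℂ) / a) := by
    congr 1; simp [lcpFreqX, lcpFreqY]; field_simp; ring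
  rw [h₀, h₁, h₂, Complex.sinh, Complex.cosh]
  refine Prod.ext ?_ (Prod.ext ?_ ?_) <;> simp [lcpWeight] <;> ring

end Lcp

/-- Theorem 6.1 (PDE system (6.4)): `L̃_xx = (i/a³) L̃_y`, `L̃_xy = L̃`, and
`L̃_yy = −i a³ L̃_x`; the middle equation expresses minimality of `π ∘ L̃`
in `CP²₁(4)`. -/
theorem Lcp_pde_system (a : ℝ) (ha : a ≠ 0) :
    ∀ x y : ℝ,
      deriv (fun s => deriv (fun t => Lcp a t y) s) x
        = (Complex.I / (a : ℂ) ^ 3) • deriv (fun t => Lcp a x t) y ∧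
      deriv (fun s => deriv (fun t => Lcp a s t) y) x = Lcp a x y ∧
      deriv (fun s => deriv (fun t => Lcp a x t) s) y
        = (-(Complex.I * (a : ℂ) ^ 3)) • deriv (fun t => Lcp a t y) x := by
  intro x y
  have hL : Lcp a = expSum Finset.univ (lcpFreqX a) (lcpFreqY a) lcpWeight :=
    funext₂ (Lcp_eq_expSum ha)
  have hp : ∀ i ∈ Finset.univ, lcpFreqX a i ^ 3 = I / a ^ 3 :=
    fun i _ => lcpFreqX_pow_three ha i
  have hpq : ∀ i ∈ Finset.univ, lcpFreqX a i * lcpFreqY a i = 1 :=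
    fun i _ => lcpFreqX_mul_lcpFreqY ha i
  have hc : -(I * a ^ 3) = (I / a ^ 3)⁻¹ := by
    have haC : (a : ℂ) ≠ 0 := Complex.ofReal_ne_zero.mpr ha
    field_simp
    linear_combination -I_sq
  rw [hL, hc]
  exact ⟨expSum_deriv_xx lcpWeight hp hpq x y, expSum_deriv_xy lcpWeight hpq x y,
    expSum_deriv_yy lcpWeight hp hpq x y⟩
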